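/- Let R be a ring, β a central unit, b a central element, and x, z elements satisfying z*x = β*x*z + b. Then for all natural numbers n, m: z^n * x^m = sum over k from 0 to min(m,n) of β^((m-k)(n-k)) * b^k * [n choose k]_β * [m choose k]_β * ([k]_β)! * x^(m-k) * z^(n-k). -/

import Mathlib

/-- The q-integer `[m]_q = 1 + q + ... + q^(m-1)` as a ring element. -/
def qInt {R : Type*} [Ring R] (q : R) (m : ℕ) : R := ∑ i ∈ Finset.range m, q ^ i

/-- The q-factorial `[k]_q! = [1]_q [2]_q ⋯ [k]_q`. -/
def qFactorial {R : Type*} [Ring R] (q : R) : ℕ → R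
  | 0 => 1
  | k + 1 => qFactorial q k * qInt q (k + 1)

/-- Gaussian (q-)binomial coefficient as an element of a ring, defined by the
q-Pascal recurrence. -/
def gaussBinom {R : Type*} [Ring R] (q : R) : ℕ → ℕ → R
  | _, 0 => 1
  | 0, _ + 1 => 0
  | n + 1, k + 1 => gaussBinom q n k + q ^ (k + 1) * gaussBinom q n (k + 1)

section maps
variable {R S : Type*} [Ring R] [Ring S] (f : R →+* S) (q : R)

lemma map_qInt (m : ℕ) : f (qInt q m) = qInt (f q) m := by simp [qInt]

lemma map_qFactorial (k : ℕ) : f (qFactorial q k) = qFactorial (f q) k := by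
  induction k with
  | zero => simp [qFactorial]
  | succ k ih => simp [qFactorial, ih, map_qInt]

lemma map_gaussBinom (n : ℕ) : ∀ k, f (gaussBinom q n k) = gaussBinom (f q) n k := by
  induction n with
  | zero => intro k; cases k <;> simp [gaussBinom]
  | succ n ih => intro k; cases k with
    | zero => simp [gaussBinom]
    | succ k => simp [gaussBinom, ih]
end maps

section anyring
variable {R : Type*} [Ring R] (q : R)

lemma gaussBinom_zero_right : ∀ n, gaussBinom q n 0 = 1
  | 0 => rfl
  | _ + 1 => rfl

lemma gaussBinom_eq_zero : ∀ {n k : ℕ}, n < k → gaussBinom q n k = 0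
  | 0, _ + 1, _ => rfl
  | n + 1, k + 1, h => by
      have h1 : n < k := by omega
      simp [gaussBinom, gaussBinom_eq_zero h1, gaussBinom_eq_zero (Nat.lt_succ_of_lt h1)]

lemma qInt_add (a c : ℕ) : qInt q (a + c) = qInt q a + q ^ a * qInt q c := by
  simp [qInt, Finset.sum_range_add, pow_add, Finset.mul_sum]

lemma qInt_one : qInt q 1 = 1 := by simp [qInt]

lemma qInt_zero : qInt q 0 = 0 := by simp [qInt]

lemma qInt_succ (m : ℕ) : qInt q (m + 1) = qInt q m + q ^ m := by
  simp [qInt, Finset.sum_range_succ]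
end anyring

section comm
variable {A : Type*} [CommRing A] (q : A)

lemma gauss_pascal₂ : ∀ n k : ℕ, gaussBinom q (n + 1) (k + 1)
    = q ^ (n - k) * gaussBinom q n k + gaussBinom q n (k + 1) := by
  intro n
  induction n with
  | zero =>
    intro k
    cases k with
    | zero => simp [gaussBinom]
    | succ k => simp [gaussBinom, gaussBinom_eq_zero q (by omega : 0 < k + 2)]
  | succ n ih =>
    intro k
    cases k with
    | zero =>
      show gaussBinom q (n+1) 0 + q ^ 1 * gaussBinom q (n+1) 1
        = q ^ (n + 1 - 0) * gaussBinom q (n+1) 0 + gaussBinom q (n+1) 1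
      conv_lhs => rw [ih 0]
      show _ = q ^ (n + 1 - 0) * gaussBinom q (n+1) 0
          + (gaussBinom q n 0 + q ^ (0+1) * gaussBinom q n 1)
      rw [gaussBinom_zero_right, gaussBinom_zero_right]
      simp only [Nat.sub_zero]
      ring
    | succ j =>
      show gaussBinom q (n+1) (j+1) + q ^ (j+2) * gaussBinom q (n+1) (j+2)
        = q ^ (n + 1 - (j+1)) * gaussBinom q (n+1) (j+1) + gaussBinom q (n+1) (j+2)
      conv_lhs => rw [ih j, ih (j+1)]
      show _ = q ^ (n + 1 - (j+1)) * (gaussBinom q n j + q ^ (j+1) * gaussBinom q n (j+1))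
          + (gaussBinom q n (j+1) + q ^ (j+2) * gaussBinom q n (j+2))
      have e0 : n + 1 - (j + 1) = n - j := by omega
      rw [e0]
      rcases le_or_gt (j+1) n with hle | hlt
      · have h1 : q ^ (j+2) * q ^ (n - (j+1)) = q ^ (n+1) := by rw [← pow_add]; congr 1; omega
        have h2 : q ^ (n-j) * q ^ (j+1) = q ^ (n+1) := by rw [← pow_add]; congr 1; omega
        linear_combination gaussBinom q n (j+1) * h1 - gaussBinom q n (j+1) * h2
      · have z1 : gaussBinom q n (j+1) = 0 := gaussBinom_eq_zero q hlt
        have z2 : gaussBinom q n (j+2) = 0 := gaussBinom_eq_zero q (by omega)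
        rw [z1, z2]; ring

lemma gauss_key : ∀ m k : ℕ, qInt q (k + 1) * gaussBinom q m (k + 1)
    = qInt q (m - k) * gaussBinom q m k := by
  intro m
  induction m with
  | zero =>
    intro k
    have h0 : gaussBinom q 0 (k+1) = 0 := gaussBinom_eq_zero q (by omega)
    simp [h0, qInt_zero]
  | succ m ih =>
    intro k
    cases k with
    | zero =>
      have hC1 : gaussBinom q m 1 = qInt q m := by
        have := ih 0
        simpa [qInt_one, gaussBinom_zero_right, Nat.sub_zero] using this
      rw [qInt_one, gaussBinom_zero_right, one_mul, mul_one]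
      show gaussBinom q m 0 + q ^ (0+1) * gaussBinom q m 1 = _
      rw [gaussBinom_zero_right, hC1]
      have h1 : qInt q (m + 1) = qInt q 1 + q ^ 1 * qInt q m := by
        rw [← qInt_add]; congr 1; omega
      have h2 : (qInt q 1 : A) = 1 := qInt_one q
      simp only [Nat.sub_zero]
      linear_combination -h1 - h2
    | succ j =>
      have hL := ih (j+1)
      have hR := ih j
      show qInt q (j+2) * gaussBinom q (m+1) (j+2)
        = qInt q (m + 1 - (j+1)) * gaussBinom q (m+1) (j+1)
      have e0 : m + 1 - (j + 1) = m - j := by omega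
      rw [e0]
      show qInt q (j+2) * (gaussBinom q m (j+1) + q ^ (j+2) * gaussBinom q m (j+2))
        = qInt q (m-j) * (gaussBinom q m j + q ^ (j+1) * gaussBinom q m (j+1))
      rcases le_or_gt (j+1) m with hle | hlt
      · have hA : qInt q (j+2) + q^(j+2) * qInt q (m-(j+1)) = qInt q (m+1) := by
          rw [← qInt_add]; congr 1; omega
        have hB : qInt q (j+1) + q^(j+1) * qInt q (m-j) = qInt q (m+1) := by
          rw [← qInt_add]; congr 1; omega
        linear_combination q^(j+2) * hL + hR + gaussBinom q m (j+1) * hA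
          - gaussBinom q m (j+1) * hB
      · have z1 : gaussBinom q m (j+1) = 0 := gaussBinom_eq_zero q hlt
        have z2 : gaussBinom q m (j+2) = 0 := gaussBinom_eq_zero q (by omega)
        have e1 : m - j = 0 := by omega
        rw [z1, z2, e1, qInt_zero]; ring
end comm

/-- coefficient in the closed formula -/
def qwC {A : Type*} [Ring A] (q r : A) (n m k : ℕ) : A :=
  q ^ ((m-k)*(n-k)) * r ^ k * gaussBinom q n k * gaussBinom q m k * qFactorial q k

section main
variable {R : Type*} [Ring R] (x z β b : R)

lemma zxm (hβc : ∀ r : R, β * r = r * β) (hbc : ∀ r : R, b * r = r * b)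
    (h : z * x = β * (x * z) + b) :
    ∀ m : ℕ, z * x ^ m = β ^ m * (x ^ m * z) + b * (qInt β m * x ^ (m - 1)) := by
  intro m
  induction m with
  | zero => simp [qInt]
  | succ m ih =>
    have hxx : qInt β m * (x ^ (m-1) * x) = qInt β m * x ^ m := by
      cases m with
      | zero => rw [qInt_zero, zero_mul, zero_mul]
      | succ j => rw [Nat.add_sub_cancel, ← pow_succ]
    calc z * x ^ (m+1) = (z * x ^ m) * x := by rw [pow_succ, mul_assoc]
      _ = (β^m * (x^m*z) + b*(qInt β m * x^(m-1))) * x := by rw [ih]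
      _ = β^m * (x^m*(z*x)) + b*(qInt β m * (x^(m-1)*x)) := by
          rw [add_mul, mul_assoc, mul_assoc, mul_assoc, mul_assoc]
      _ = β^m * (x^m*(β*(x*z)+b)) + b*(qInt β m * x^m) := by rw [h, hxx]
      _ = β^m * (β*(x^(m+1)*z)) + β^m * (b*x^m) + b*(qInt β m * x^m) := by
          rw [mul_add (x^m), mul_add (β^m), ← mul_assoc (x^m) β (x*z), ← hβc (x^m),
            mul_assoc β (x^m) (x*z), ← mul_assoc (x^m) x z, ← pow_succ, ← hbc (x^m)]
      _ = β^(m+1) * (x^(m+1)*z) + b * (qInt β (m+1) * x^m) := by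
          rw [qInt_succ, add_mul, mul_add b, add_assoc]
          congr 1
          · rw [← mul_assoc, ← pow_succ]
          · rw [add_comm]
            congr 1
            rw [← mul_assoc, ← hbc (β^m), mul_assoc]
end main

theorem zn_xm_qweyl_const_closed {R : Type*} [Ring R] (x z β b : R)
    (hβ : IsUnit β) (hβc : ∀ r : R, β * r = r * β) (hbc : ∀ r : R, b * r = r * b)
    (h : z * x = β * (x * z) + b) :
    ∀ n m : ℕ,
      z ^ n * x ^ m =
        ∑ k ∈ Finset.range (min m n + 1),
          β ^ ((m - k) * (n - k)) * b ^ k * gaussBinom β n k * gaussBinom β m k *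
            qFactorial β k * x ^ (m - k) * z ^ (n - k) := by
  have hβmem : β ∈ Subring.center R := Subring.mem_center_iff.mpr fun g => (hβc g).symm
  have hbmem : b ∈ Subring.center R := Subring.mem_center_iff.mpr fun g => (hbc g).symm
  set B : Subring.center R := ⟨β, hβmem⟩ with hB
  set Bb : Subring.center R := ⟨b, hbmem⟩ with hBb
  have hc : ∀ (u : Subring.center R) (r : R), (↑u : R) * r = r * ↑u :=
    fun u r => (Subring.mem_center_iff.mp u.2 r).symm
  have hmove : ∀ (u : Subring.center R) (r s : R), r * ((↑u : R) * s) = ↑u * (r * s) := by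
    intro u r s; rw [← mul_assoc, ← hc, mul_assoc]
  have hcomb : ∀ (u v : Subring.center R) (w : R), (↑u : R) * ((↑v : R) * w) = ↑(u*v) * w := by
    intro u v w; push_cast; rw [mul_assoc]
  have hcast_qInt : ∀ i, ((qInt B i : Subring.center R) : R) = qInt β i :=
    fun i => map_qInt (Subring.subtype _) B i
  have hcast_qF : ∀ i, ((qFactorial B i : Subring.center R) : R) = qFactorial β i :=
    fun i => map_qFactorial (Subring.subtype _) B i
  have hcast_gB : ∀ i j, ((gaussBinom B i j : Subring.center R) : R) = gaussBinom β i j :=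
    fun i j => map_gaussBinom (Subring.subtype _) B i j
  have hcast_pow : ∀ i, ((B ^ i : Subring.center R) : R) = β ^ i := fun i => by push_cast; rfl
  have hbcast : ((Bb : R)) = b := rfl
  have TERM : ∀ (u v : Subring.center R) (a a' c c' : ℕ), u = v → a = a' → c = c' →
      (↑u : R) * (x^a * z^c) = (↑v : R) * (x^(a') * z^(c')) := by
    rintro u v a a' c c' rfl rfl rfl; rfl
  have L1 := zxm x z β b hβc hbc h
  have AUX : ∀ n m : ℕ, z ^ n * x ^ m =
      ∑ k ∈ Finset.range (n+1), (↑(qwC B Bb n m k) : R) * (x ^ (m-k) * z ^ (n-k)) := by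
    intro n
    induction n with
    | zero =>
      intro m
      simp [qwC, qFactorial, gaussBinom_zero_right]
    | succ n ih =>
      intro m
      have hterm2 : ∀ k ∈ Finset.range (n+1),
          z * ((↑(qwC B Bb n m k) : R) * (x^(m-k) * z^(n-k)))
          = (↑(qwC B Bb n m k * B^(m-k)) : R) * (x^(m-k) * z^(n+1-k))
            + (↑(qwC B Bb n m k * Bb * qInt B (m-k)) : R) * (x^(m-(k+1)) * z^(n-k)) := by
        intro k hk
        have hkn : k ≤ n := by
          have := Finset.mem_range.mp hk; omega
        have ez : n - k + 1 = n + 1 - k := by omega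
        calc z * ((↑(qwC B Bb n m k) : R) * (x^(m-k) * z^(n-k)))
            = (↑(qwC B Bb n m k) : R) * ((z * x^(m-k)) * z^(n-k)) := by
              rw [hmove, ← mul_assoc z]
          _ = (↑(qwC B Bb n m k) : R)
              * ((β^(m-k) * (x^(m-k)*z) + b * (qInt β (m-k) * x^(m-k-1))) * z^(n-k)) := by
              rw [L1 (m-k)]
          _ = (↑(qwC B Bb n m k) : R) * (β^(m-k) * (x^(m-k) * z^(n+1-k)))
              + (↑(qwC B Bb n m k) : R) * (b * (qInt β (m-k) * (x^(m-(k+1)) * z^(n-k)))) := by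
              rw [add_mul, mul_add]
              congr 2
              · rw [mul_assoc (β^(m-k)), mul_assoc (x^(m-k)) z, ← pow_succ', ez]
              · rw [mul_assoc b, mul_assoc (qInt β (m-k)), Nat.sub_sub]
          _ = _ := by
              rw [← hcast_pow (m-k), ← hcast_qInt (m-k), ← hbcast, hcomb, hcomb, hcomb]
      have split : z^(n+1) * x^m
          = (∑ k ∈ Finset.range (n+1),
              (↑(qwC B Bb n m k * B^(m-k)) : R) * (x^(m-k) * z^(n+1-k)))
            + ∑ k ∈ Finset.range (n+1),
              (↑(qwC B Bb n m k * Bb * qInt B (m-k)) : R) * (x^(m-(k+1)) * z^(n-k)) := by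
        rw [pow_succ' z n, mul_assoc, ih m, Finset.mul_sum, ← Finset.sum_add_distrib]
        exact Finset.sum_congr rfl hterm2
      rw [split]
      -- key splitting of the new coefficient
      have keysplit : ∀ j, j ≤ n → qwC B Bb (n+1) m (j+1)
          = (B^((m-(j+1))*(n+1-(j+1))) * Bb^(j+1) * gaussBinom B n (j+1)
              * gaussBinom B m (j+1) * qFactorial B (j+1))
            + qwC B Bb n m j * Bb * qInt B (m-j) := by
        intro j hj
        have e1 : n + 1 - (j+1) = n - j := by omega
        unfold qwC
        rw [gauss_pascal₂, e1]
        rcases le_or_gt (j+1) m with hle | hlt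
        · have hE : B^((m-(j+1))*(n-j)) * B^(n-j) = B^((m-j)*(n-j)) := by
            rw [← pow_add]; congr 1
            have e2 : m - j = (m - (j+1)) + 1 := by omega
            rw [e2, Nat.succ_mul]
          have hK := gauss_key B m j
          have hF : qFactorial B (j+1) = qFactorial B j * qInt B (j+1) := rfl
          linear_combination (Bb^(j+1) * gaussBinom B n j * gaussBinom B m (j+1)
              * qFactorial B (j+1)) * hE
            + (Bb^(j+1) * B^((m-j)*(n-j)) * gaussBinom B n j * qFactorial B j) * hK
            + (Bb^(j+1) * B^((m-j)*(n-j)) * gaussBinom B n j * gaussBinom B m (j+1)) * hF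
        · have z1 : gaussBinom B m (j+1) = 0 := gaussBinom_eq_zero B hlt
          have z2 : qInt B (m-j) = 0 := by
            have e3 : m - j = 0 := by omega
            rw [e3, qInt_zero]
          rw [z1, z2]; ring
      -- rewrite the target sum
      conv_rhs => rw [Finset.sum_range_succ']
      have hsplitsum : ∑ j ∈ Finset.range (n+1),
            (↑(qwC B Bb (n+1) m (j+1)) : R) * (x^(m-(j+1)) * z^(n+1-(j+1)))
          = (∑ j ∈ Finset.range (n+1),
              (↑(B^((m-(j+1))*(n+1-(j+1))) * Bb^(j+1) * gaussBinom B n (j+1)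
                * gaussBinom B m (j+1) * qFactorial B (j+1)) : R)
                * (x^(m-(j+1)) * z^(n+1-(j+1))))
            + ∑ j ∈ Finset.range (n+1),
              (↑(qwC B Bb n m j * Bb * qInt B (m-j)) : R) * (x^(m-(j+1)) * z^(n-j)) := by
        rw [← Finset.sum_add_distrib]
        refine Finset.sum_congr rfl fun j hj => ?_
        have hjn : j ≤ n := by have := Finset.mem_range.mp hj; omega
        rw [keysplit j hjn]
        push_cast
        rw [add_mul]
      rw [hsplitsum]
      -- now match the two sums
      have hfirst : (∑ j ∈ Finset.range (n+1),
              (↑(B^((m-(j+1))*(n+1-(j+1))) * Bb^(j+1) * gaussBinom B n (j+1)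
                * gaussBinom B m (j+1) * qFactorial B (j+1)) : R)
                * (x^(m-(j+1)) * z^(n+1-(j+1))))
            + (↑(qwC B Bb (n+1) m 0) : R) * (x^(m-0) * z^(n+1-0))
          = ∑ k ∈ Finset.range (n+1),
              (↑(qwC B Bb n m k * B^(m-k)) : R) * (x^(m-k) * z^(n+1-k)) := by
        have hfull := Finset.sum_range_succ'
          (fun k => (↑(B^((m-k)*(n+1-k)) * Bb^k * gaussBinom B n k * gaussBinom B m k
            * qFactorial B k) : R) * (x^(m-k) * z^(n+1-k))) (n+1)
        have h0 : (↑(qwC B Bb (n+1) m 0) : R) * (x^(m-0) * z^(n+1-0))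
            = (↑(B^((m-0)*(n+1-0)) * Bb^0 * gaussBinom B n 0 * gaussBinom B m 0
              * qFactorial B 0) : R) * (x^(m-0) * z^(n+1-0)) := by
          refine TERM _ _ _ _ _ _ ?_ rfl rfl
          unfold qwC
          simp [gaussBinom_zero_right]
        rw [h0, ← hfull, Finset.sum_range_succ]
        have hlast : (↑(B^((m-(n+1))*(n+1-(n+1))) * Bb^(n+1) * gaussBinom B n (n+1)
            * gaussBinom B m (n+1) * qFactorial B (n+1)) : R)
              * (x^(m-(n+1)) * z^(n+1-(n+1))) = 0 := by
          rw [gaussBinom_eq_zero B (by omega : n < n+1)]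
          simp
        rw [hlast, add_zero]
        refine Finset.sum_congr rfl fun k hk => ?_
        have hkn : k ≤ n := by have := Finset.mem_range.mp hk; omega
        refine TERM _ _ _ _ _ _ ?_ rfl rfl
        unfold qwC
        have hp : B^((m-k)*(n-k)) * B^(m-k) = B^((m-k)*(n+1-k)) := by
          rw [← pow_add]; congr 1
          have e4 : n + 1 - k = (n - k) + 1 := by omega
          rw [e4, Nat.mul_succ]
        linear_combination (-(Bb^k * gaussBinom B n k * gaussBinom B m k * qFactorial B k)) * hp
      rw [add_right_comm, hfirst]
  intro n m
  rw [AUX n m]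
  have hterm : ∀ k, (↑(qwC B Bb n m k) : R) * (x ^ (m-k) * z ^ (n-k)) =
      β ^ ((m - k) * (n - k)) * b ^ k * gaussBinom β n k * gaussBinom β m k *
        qFactorial β k * x ^ (m - k) * z ^ (n - k) := by
    intro k
    show ((↑(B ^ ((m-k)*(n-k)) * Bb ^ k * gaussBinom B n k * gaussBinom B m k
      * qFactorial B k) : R)) * (x ^ (m-k) * z ^ (n-k)) = _
    push_cast
    rw [hcast_gB, hcast_gB, hcast_qF]
    simp only [← mul_assoc]
    rfl
  rw [Finset.sum_congr rfl fun k _ => hterm k]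
  refine (Finset.sum_subset (Finset.range_subset_range.mpr (by omega : min m n + 1 ≤ n + 1))
    fun k hk hk' => ?_).symm
  have hmk : m < k := by
    have h1 := Finset.mem_range.mp hk
    have h2 : ¬ k < min m n + 1 := fun hcon => hk' (Finset.mem_range.mpr hcon)
    omega
  rw [gaussBinom_eq_zero β hmk]
  simp
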